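/- Let T be a rooted binary tree (every internal node has exactly two children) with positive edge lengths and minimum edge length Δ. If the input distances d̂ satisfy max over terminal pairs |d̂(i,j) − d(i,j)| < Δ/2, then for any three leaves i, j, k with lca(i,j) a strict descendant of lca(i,k), the estimated values ρ̂(i,j) = (d̂(s,i)+d̂(s,j)−d̂(i,j))/2 satisfy ρ̂(i,j) > ρ̂(i,k). -/

import Mathlib

/-- A finite rooted tree, given by a parent function on a finite vertex set.
The root `s` is its own parent, every vertex reaches the root by iterating
`parent`, and `lca i j` is the nearest (lowest) common ancestor of `i` and `j`:
it is a common ancestor, and every common ancestor of `i` and `j` is an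
ancestor of it. -/
structure TreeShape where
  V : Type
  fintypeV : Fintype V
  decEqV : DecidableEq V
  s : V
  parent : V → V
  parent_root : parent s = s
  reach : ∀ v, ∃ n, parent^[n] v = s
  lca : V → V → V
  lca_comm : ∀ i j, lca i j = lca j i
  lca_anc_left : ∀ i j, ∃ n, parent^[n] i = lca i j
  lca_anc_right : ∀ i j, ∃ n, parent^[n] j = lca i j
  lca_greatest : ∀ i j a, (∃ n, parent^[n] i = a) → (∃ n, parent^[n] j = a) →
      ∃ n, parent^[n] (lca i j) = a

attribute [instance] TreeShape.fintypeV TreeShape.decEqV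

namespace TreeShape
variable (S : TreeShape)

/-- `a` is an ancestor of `v` (possibly `a = v`). -/
def IsAncestor (a v : S.V) : Prop := ∃ n, S.parent^[n] v = a

/-- A leaf: a non-root vertex with no children. -/
def IsLeaf (v : S.V) : Prop := v ≠ S.s ∧ ∀ u, S.parent u ≠ v

/-- Terminal nodes: the root (source) together with the leaves (destinations). -/
def Terminal (v : S.V) : Prop := v = S.s ∨ S.IsLeaf v

/-- Two distinct non-root vertices are siblings if they share the same parent. -/
def Siblings (i j : S.V) : Prop := i ≠ j ∧ i ≠ S.s ∧ j ≠ S.s ∧ S.parent i = S.parent j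

end TreeShape

/-- An additive metric on a rooted tree: each edge `(parent v, v)` (for `v ≠ s`)
carries a positive finite length `w v`, and `D v` is the sum of the edge lengths
on the path from the root `s` down to `v`. -/
structure AddMetric (S : TreeShape) where
  w : S.V → ℝ
  w_pos : ∀ v, v ≠ S.s → 0 < w v
  D : S.V → ℝ
  D_root : D S.s = 0
  D_step : ∀ v, v ≠ S.s → D v = D (S.parent v) + w v

namespace AddMetric
variable {S : TreeShape} (d : AddMetric S)

/-- The induced path distance on the tree: the sum of the edge lengths on the
unique path between `i` and `j`, which goes through `lca i j`. -/
def dist (i j : S.V) : ℝ := d.D i + d.D j - 2 * d.D (S.lca i j)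

/-- `rho i j` is the distance from the root to the nearest common ancestor. -/
def rho (i j : S.V) : ℝ := d.D (S.lca i j)

end AddMetric

/-!
Writing `ρ̂(i,j) = (d̂(s,i) + d̂(s,j) - d̂(i,j)) / 2`, the term `d̂(s,i)` cancels in
`ρ̂(i,j) - ρ̂(i,k)`, which therefore involves only four input distances. Since
`d(s,x) = D x` and `d(i,x) = D i + D x - 2 ρ(i,x)`, their errors (each `< Δ/2`) shift it
by less than `Δ` away from `ρ(i,j) - ρ(i,k)`, and the latter is at least `Δ` because the
path from `lca(i,k)` down to the strict descendant `lca(i,j)` contains an edge.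
-/

namespace TreeShape

variable (S : TreeShape)

noncomputable def estRho (dh : S.V → S.V → ℝ) (i j : S.V) : ℝ := (dh S.s i + dh S.s j - dh i j) / 2

lemma lca_root_left (x : S.V) : S.lca S.s x = S.s := by
  obtain ⟨n, hn⟩ := S.lca_anc_left S.s x
  rw [← hn, Function.iterate_fixed S.parent_root]

end TreeShape

namespace AddMetric

variable {S : TreeShape} (d : AddMetric S)

lemma dist_root_left (x : S.V) : d.dist S.s x = d.D x := by
  rw [dist, S.lca_root_left, d.D_root]
  ring

lemma D_add_le_of_isAncestor {Δ : ℝ} (hΔ : ∀ v, v ≠ S.s → Δ ≤ d.w v) :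
    ∀ {a v : S.V}, S.IsAncestor a v → v ≠ a → d.D a + Δ ≤ d.D v := by
  rintro a v ⟨n, hn⟩ hne
  induction n generalizing v with
  | zero => exact absurd hn hne
  | succ n ih =>
    rw [Function.iterate_succ_apply] at hn
    have hv : v ≠ S.s := by
      rintro rfl
      rw [S.parent_root, Function.iterate_fixed S.parent_root] at hn
      exact hne hn
    by_cases hpa : S.parent v = a
    · linarith [hpa ▸ d.D_step v hv, hΔ v hv]
    · linarith [ih hn hpa, d.D_step v hv, d.w_pos v hv]

lemma rho_sub_rho_sub_lt_estRho_sub_estRho (dh : S.V → S.V → ℝ) {ε : ℝ} {i j k : S.V}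
    (hsj : |dh S.s j - d.dist S.s j| < ε) (hsk : |dh S.s k - d.dist S.s k| < ε)
    (hij : |dh i j - d.dist i j| < ε) (hik : |dh i k - d.dist i k| < ε) :
    d.rho i j - d.rho i k - 2 * ε < S.estRho dh i j - S.estRho dh i k := by
  rw [d.dist_root_left] at hsj hsk
  rw [abs_lt] at hsj hsk hij hik
  simp only [dist, rho, TreeShape.estRho] at *
  linarith [hsj.1, hsk.2, hij.2, hik.1]

end AddMetric

theorem binary_estimated_rho_order_general (S : TreeShape) (d : AddMetric S)
    (Δ : ℝ)
    (hΔle : ∀ v, v ≠ S.s → Δ ≤ d.w v)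
    (dh : S.V → S.V → ℝ)
    (happrox : ∀ i j, S.Terminal i → S.Terminal j →
      |dh i j - d.dist i j| < Δ / 2)
    (i j k : S.V) (hi : S.IsLeaf i) (hj : S.IsLeaf j) (hk : S.IsLeaf k)
    (hdesc : S.IsAncestor (S.lca i k) (S.lca i j) ∧ S.lca i j ≠ S.lca i k) :
    (dh S.s i + dh S.s j - dh i j) / 2 > (dh S.s i + dh S.s k - dh i k) / 2 := by
  have hgap : d.rho i k + Δ ≤ d.rho i j := d.D_add_le_of_isAncestor hΔle hdesc.1 hdesc.2
  have hs : S.Terminal S.s := Or.inl rfl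
  have hest := d.rho_sub_rho_sub_lt_estRho_sub_estRho dh
    (happrox _ _ hs (Or.inr hj)) (happrox _ _ hs (Or.inr hk))
    (happrox _ _ (Or.inr hi) (Or.inr hj)) (happrox _ _ (Or.inr hi) (Or.inr hk))
  change S.estRho dh i k < S.estRho dh i j
  linarith

/-- in a rooted binary tree (every internal node has exactly two
children) with minimum edge length `Δ`, if the input distances `d̂` on the
terminal nodes satisfy `|d̂(i,j) − d(i,j)| < Δ/2` for all terminal pairs, then
for any three leaves `i, j, k` with `lca(i,j)` a strict descendant of
`lca(i,k)`, the estimated values `ρ̂` satisfy `ρ̂(i,j) > ρ̂(i,k)`. -/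
theorem binary_estimated_rho_order (S : TreeShape) (d : AddMetric S)
    (hbin : ∀ v : S.V, (∃ u, u ≠ v ∧ S.parent u = v) →
      ∃ u₁ u₂, u₁ ≠ u₂ ∧ S.parent u₁ = v ∧ S.parent u₂ = v ∧
        ∀ u, u ≠ v → S.parent u = v → u = u₁ ∨ u = u₂)
    (Δ : ℝ)
    (hΔle : ∀ v, v ≠ S.s → Δ ≤ d.w v) (hΔmem : ∃ v, v ≠ S.s ∧ d.w v = Δ)
    (dh : S.V → S.V → ℝ) (hsymm : ∀ i j, dh i j = dh j i)
    (happrox : ∀ i j, S.Terminal i → S.Terminal j →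
      |dh i j - d.dist i j| < Δ / 2)
    (i j k : S.V) (hi : S.IsLeaf i) (hj : S.IsLeaf j) (hk : S.IsLeaf k)
    (hdesc : S.IsAncestor (S.lca i k) (S.lca i j) ∧ S.lca i j ≠ S.lca i k) :
    (dh S.s i + dh S.s j - dh i j) / 2 > (dh S.s i + dh S.s k - dh i k) / 2 :=
  binary_estimated_rho_order_general S d Δ hΔle dh happrox i j k hi hj hk hdesc
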